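/- For every integer Np with 0 ≤ Np ≤ (L−1)/2 and arbitrary U, J ∈ ℝ, the state Φ_G = ã_{L,↑}† (ζ†)^{Np} Φ0 satisfies H_x Φ_G = 0 for every x ∈ {1, …, L−1}; in particular H Φ_G = 0 where H = Σ_{x=1}^{L−1} H_x. -/
import Mathlib


noncomputable section

/-- `w_x = sin(δ/2)` for odd `x`, `cos(δ/2)` for even `x`. -/
def wR (δ : ℝ) (x : ℕ) : ℝ := if Odd x then Real.sin (δ/2) else Real.cos (δ/2)

/-- On-site potential `μ_x = −(V/2)(1 − (−1)^x cos δ)`. -/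
def muPot (Vv δ : ℝ) (x : ℕ) : ℝ := -(Vv/2) * (1 - (-1 : ℝ)^x * Real.cos δ)

/-- Bond-charge coupling `X_x = (−1)^{x+1} X0` with `X0 = (V/2) sin δ cos δ`. -/
def Xpar (Vv δ : ℝ) (x : ℕ) : ℝ := (-1 : ℝ)^(x+1) * ((Vv/2) * Real.sin δ * Real.cos δ)

/-- The antisymmetric coefficient matrix `F_{x,y}`. -/
def Fc (L : ℕ) (δ : ℝ) (x y : ℕ) : ℂ :=
  if y = x + 1 ∨ (x = 1 ∧ y = L) then -(Real.sin δ) / 2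
  else if x = y + 1 ∨ (x = L ∧ y = 1) then (Real.sin δ) / 2
  else 0

/-- The Pauli matrices `p^{(1)}, p^{(2)}, p^{(3)}`; spin indices are `Bool`
with `true = ↑` (first row/column) and `false = ↓`. -/
def pauli : Fin 3 → Bool → Bool → ℂ
  | 0, σ, τ => if σ ≠ τ then 1 else 0
  | 1, σ, τ => if σ = true ∧ τ = false then -Complex.I
               else if σ = false ∧ τ = true then Complex.I else 0
  | 2, σ, τ => if σ = τ then (if σ = true then 1 else -1) else 0

variable {𝓥 : Type*} [AddCommGroup 𝓥] [Module ℂ 𝓥]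

/-- Number operator `n_{x,σ} = c_{x,σ}† c_{x,σ}`. -/
def nOp (c cdag : ℕ → Bool → Module.End ℂ 𝓥) (x : ℕ) (σ : Bool) : Module.End ℂ 𝓥 :=
  cdag x σ * c x σ

/-- Number operator `n_x = n_{x,↑} + n_{x,↓}`. -/
def ntot (c cdag : ℕ → Bool → Module.End ℂ 𝓥) (x : ℕ) : Module.End ℂ 𝓥 :=
  nOp c cdag x true + nOp c cdag x false

/-- Spin operator `S_x^{(l)} = (1/2) Σ_{σ,τ} c_{x,σ}† p^{(l)}_{σ,τ} c_{x,τ}`. -/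
def spinOp (c cdag : ℕ → Bool → Module.End ℂ 𝓥) (x : ℕ) (l : Fin 3) : Module.End ℂ 𝓥 :=
  (1/2 : ℂ) • ∑ σ : Bool, ∑ τ : Bool, pauli l σ τ • (cdag x σ * c x τ)

/-- Hopping term `H_{t,x}`. -/
def Ht (t Vv δ : ℝ) (c cdag : ℕ → Bool → Module.End ℂ 𝓥) (x : ℕ) : Module.End ℂ 𝓥 :=
  (-t : ℂ) • ∑ σ : Bool, (cdag x σ * c (x+1) σ + cdag (x+1) σ * c x σ)
    - (muPot Vv δ x : ℂ) • ntot c cdag x - (muPot Vv δ (x+1) : ℂ) • ntot c cdag (x+1)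

/-- On-site interaction `H_{U,x}`. -/
def HU (U : ℝ) (c cdag : ℕ → Bool → Module.End ℂ 𝓥) (x : ℕ) : Module.End ℂ 𝓥 :=
  (U : ℂ) • (nOp c cdag x true * nOp c cdag x false
    + nOp c cdag (x+1) true * nOp c cdag (x+1) false)

/-- Charge-charge interaction `H_{V,x} = −V n_x n_{x+1}`. -/
def HV (Vv : ℝ) (c cdag : ℕ → Bool → Module.End ℂ 𝓥) (x : ℕ) : Module.End ℂ 𝓥 :=
  (-Vv : ℂ) • (ntot c cdag x * ntot c cdag (x+1))

/-- Spin-spin interaction `H_{J,x} = J(n_x n_{x+1}/4 − S_x · S_{x+1})`. -/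
def HJ (J : ℝ) (c cdag : ℕ → Bool → Module.End ℂ 𝓥) (x : ℕ) : Module.End ℂ 𝓥 :=
  (J : ℂ) • ((1/4 : ℂ) • (ntot c cdag x * ntot c cdag (x+1))
    - ∑ l : Fin 3, spinOp c cdag x l * spinOp c cdag (x+1) l)

/-- Bond-charge interaction `H_{X,x}` with `X_x = (−1)^{x+1} X0`. -/
def HX (Vv δ : ℝ) (c cdag : ℕ → Bool → Module.End ℂ 𝓥) (x : ℕ) : Module.End ℂ 𝓥 :=
  ∑ σ : Bool,
    ((Xpar Vv δ x : ℂ) • nOp c cdag x (!σ) + (Xpar Vv δ (x+1) : ℂ) • nOp c cdag (x+1) (!σ))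
      * (cdag x σ * c (x+1) σ + cdag (x+1) σ * c x σ)

/-- The local Hamiltonian `H_x = H_{t,x} + H_{U,x} + H_{V,x} + H_{J,x} + H_{X,x}`. -/
def Hloc (t Vv δ U J : ℝ) (c cdag : ℕ → Bool → Module.End ℂ 𝓥) (x : ℕ) : Module.End ℂ 𝓥 :=
  Ht t Vv δ c cdag x + HU U c cdag x + HV Vv c cdag x + HJ J c cdag x + HX Vv δ c cdag x

/-- `ã_{x,↑}†` built from a one-spin-component family of creation operators. -/
def taOp (L : ℕ) (δ : ℝ) (c : ℕ → Module.End ℂ 𝓥) (x : ℕ) : Module.End ℂ 𝓥 :=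
  if x = L then ((Real.sin δ : ℂ))⁻¹ • ∑ y ∈ Finset.Icc 1 L, (wR δ y : ℂ) • c y
  else ((Real.sin δ : ℂ))⁻¹ •
    (∑ y ∈ Finset.Icc 1 x, (wR δ y : ℂ) • c y - ∑ y ∈ Finset.Icc (x+1) L, (wR δ y : ℂ) • c y)

/-- The pair operator `ζ† = Σ_{x,y=1}^{L} F_{x,y} ã_{x,↑}† ã_{y,↑}†`. -/
def zetaDag (L : ℕ) (δ : ℝ) (cdag : ℕ → Module.End ℂ 𝓥) : Module.End ℂ 𝓥 :=
  ∑ x ∈ Finset.Icc 1 L, ∑ y ∈ Finset.Icc 1 L,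
    Fc L δ x y • (taOp L δ cdag x * taOp L δ cdag y)

namespace S8aux

open Finset

lemma half {M : Type*} [AddCommGroup M] [Module ℂ M] {X : M} (h : X + X = 0) : X = 0 := by
  have h2 : (2:ℂ) • X = 0 := by rw [two_smul]; exact h
  rcases smul_eq_zero.mp h2 with h | h
  · exact absurd h (by norm_num)
  · exact h

variable {V : Type*} [AddCommGroup V] [Module ℂ V]

/-- linear combination of creation operators over sites `1..L`. -/
def Ee (L : ℕ) (d : ℕ → Module.End ℂ V) (f : ℕ → ℂ) : Module.End ℂ V :=
  ∑ y ∈ Finset.Icc 1 L, f y • d y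

/-- coefficients of `taOp`. -/
def cf (L : ℕ) (δ : ℝ) (x y : ℕ) : ℂ :=
  if x = L ∨ y ≤ x then (Real.sin δ : ℂ)⁻¹ * ((wR δ y : ℝ) : ℂ)
  else -((Real.sin δ : ℂ)⁻¹ * ((wR δ y : ℝ) : ℂ))

/-- coefficients of the bond creation operator `b̃_x†`. -/
def bcf (δ : ℝ) (x y : ℕ) : ℂ :=
  if y = x then ((wR δ x : ℝ) : ℂ) else if y = x + 1 then ((wR δ (x+1) : ℝ) : ℂ) else 0

lemma Ee_congr {L : ℕ} (d : ℕ → Module.End ℂ V) {f g : ℕ → ℂ}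
    (h : ∀ y ∈ Finset.Icc 1 L, f y = g y) : Ee L d f = Ee L d g :=
  Finset.sum_congr rfl fun y hy => by rw [h y hy]

lemma Ee_add {L : ℕ} (d : ℕ → Module.End ℂ V) (f g : ℕ → ℂ) :
    Ee L d (fun y => f y + g y) = Ee L d f + Ee L d g := by
  simp [Ee, add_smul, Finset.sum_add_distrib]

lemma Ee_sub {L : ℕ} (d : ℕ → Module.End ℂ V) (f g : ℕ → ℂ) :
    Ee L d (fun y => f y - g y) = Ee L d f - Ee L d g := by
  simp [Ee, sub_smul, Finset.sum_sub_distrib]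

lemma Ee_mulc {L : ℕ} (d : ℕ → Module.End ℂ V) (α : ℂ) (f : ℕ → ℂ) :
    Ee L d (fun y => α * f y) = α • Ee L d f := by
  simp [Ee, mul_smul, Finset.smul_sum]

lemma Ee_anticomm {L : ℕ} (d : ℕ → Module.End ℂ V)
    (hdd : ∀ y ∈ Finset.Icc 1 L, ∀ z ∈ Finset.Icc 1 L, d y * d z + d z * d y = 0)
    (f g : ℕ → ℂ) : Ee L d f * Ee L d g = -(Ee L d g * Ee L d f) := by
  calc Ee L d f * Ee L d g
      = ∑ y ∈ Finset.Icc 1 L, ∑ z ∈ Finset.Icc 1 L, (f y • d y) * (g z • d z) :=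
        Finset.sum_mul_sum _ _ _ _
    _ = ∑ y ∈ Finset.Icc 1 L, ∑ z ∈ Finset.Icc 1 L, -((g z • d z) * (f y • d y)) := by
        refine Finset.sum_congr rfl fun y hy => Finset.sum_congr rfl fun z hz => ?_
        have h : d y * d z = -(d z * d y) := eq_neg_of_add_eq_zero_left (hdd y hy z hz)
        rw [smul_mul_smul_comm, smul_mul_smul_comm, h, smul_neg, mul_comm (g z) (f y)]
    _ = -(∑ z ∈ Finset.Icc 1 L, ∑ y ∈ Finset.Icc 1 L, (g z • d z) * (f y • d y)) := by
        rw [Finset.sum_comm]; simp [Finset.sum_neg_distrib]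
    _ = -(Ee L d g * Ee L d f) := congrArg Neg.neg (Finset.sum_mul_sum _ _ _ _).symm

lemma q_mul_Ee {L : ℕ} (d : ℕ → Module.End ℂ V) (q : Module.End ℂ V) (κ : ℕ → ℂ)
    (hq : ∀ z ∈ Finset.Icc 1 L, q * d z = κ z • 1 - d z * q) (f : ℕ → ℂ) :
    q * Ee L d f = (∑ z ∈ Finset.Icc 1 L, f z * κ z) • (1 : Module.End ℂ V) - Ee L d f * q := by
  rw [Ee, Finset.mul_sum, Finset.sum_mul, Finset.sum_smul, ← Finset.sum_sub_distrib]
  refine Finset.sum_congr rfl fun z hz => ?_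
  rw [mul_smul_comm, hq z hz, smul_sub, smul_smul, smul_mul_assoc]

lemma taOp_eq {L : ℕ} {δ : ℝ} (d : ℕ → Module.End ℂ V) {x : ℕ} (hx1 : 1 ≤ x) (hxL : x ≤ L) :
    taOp L δ d x = Ee L d (cf L δ x) := by
  rcases eq_or_ne x L with rfl | hne
  · rw [taOp, if_pos rfl, Ee, Finset.smul_sum]
    refine Finset.sum_congr rfl fun y hy => ?_
    rw [cf, if_pos (Or.inl rfl), smul_smul]
  · rw [taOp, if_neg hne]
    have hsplit : Finset.Icc 1 L = Finset.Icc 1 x ∪ Finset.Icc (x+1) L := by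
      ext z; simp only [Finset.mem_Icc, Finset.mem_union]; omega
    have hdisj : Disjoint (Finset.Icc 1 x) (Finset.Icc (x+1) L) := by
      rw [Finset.disjoint_left]; intro z hz hz'
      simp only [Finset.mem_Icc] at hz hz'; omega
    rw [Ee, hsplit, Finset.sum_union hdisj, smul_sub, sub_eq_add_neg,
      Finset.smul_sum, Finset.smul_sum, ← Finset.sum_neg_distrib]
    congr 1
    · refine Finset.sum_congr rfl fun y hy => ?_
      rw [cf, if_pos (Or.inr (Finset.mem_Icc.mp hy).2), smul_smul]
    · refine Finset.sum_congr rfl fun y hy => ?_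
      have hy' := Finset.mem_Icc.mp hy
      have hcond : ¬(x = L ∨ y ≤ x) := by push_neg; exact ⟨hne, by omega⟩
      rw [cf, if_neg hcond, neg_smul, smul_smul]

lemma Ee_two {L : ℕ} (d : ℕ → Module.End ℂ V) {x : ℕ} (δ : ℝ)
    (hx : x ∈ Finset.Icc 1 L) (hx1 : x + 1 ∈ Finset.Icc 1 L) :
    Ee L d (bcf δ x) = ((wR δ x : ℝ) : ℂ) • d x + ((wR δ (x+1) : ℝ) : ℂ) • d (x+1) := by
  have hsub : ({x, x+1} : Finset ℕ) ⊆ Finset.Icc 1 L := by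
    intro z hz; simp only [Finset.mem_insert, Finset.mem_singleton] at hz
    rcases hz with rfl | rfl <;> assumption
  have hzero : ∀ y ∈ Finset.Icc 1 L, y ∉ ({x, x+1} : Finset ℕ) → bcf δ x y • d y = 0 := by
    intro y _ hy; simp only [Finset.mem_insert, Finset.mem_singleton, not_or] at hy
    rw [bcf, if_neg hy.1, if_neg hy.2, zero_smul]
  rw [Ee, ← Finset.sum_subset hsub hzero, Finset.sum_pair (by omega : x ≠ x + 1)]
  have hne : ¬ (x + 1 = x) := by omega
  simp [bcf, hne]

lemma sum_pair_ite {M : Type*} [AddCommMonoid M] {s : Finset ℕ} {p q : ℕ}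
    (hp : p ∈ s) (hq : q ∈ s) (hpq : p ≠ q) (A B : ℕ → M) :
    (∑ z ∈ s, if z = p then A z else if z = q then B z else 0) = A p + B q := by
  have key : ∀ z ∈ s, (if z = p then A z else if z = q then B z else 0)
      = (if z = p then A p else 0) + (if z = q then B q else 0) := by
    intro z _
    by_cases h1 : z = p
    · subst h1; simp [hpq]
    · by_cases h2 : z = q
      · subst h2; simp [h1]
      · simp [h1, h2]
  rw [Finset.sum_congr rfl key, Finset.sum_add_distrib,
      Finset.sum_ite_eq' s p (fun _ => A p), Finset.sum_ite_eq' s q (fun _ => B q),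
      if_pos hp, if_pos hq]

lemma Fc_antisymm {L : ℕ} (hL : 3 ≤ L) (δ : ℝ) {x y : ℕ}
    (hx : x ∈ Finset.Icc 1 L) (hy : y ∈ Finset.Icc 1 L) :
    Fc L δ y x = -Fc L δ x y := by
  have hx' := Finset.mem_Icc.mp hx; have hy' := Finset.mem_Icc.mp hy
  simp only [Fc, true_and, and_true]
  split_ifs <;> first | ring1 | (exfalso; omega)

lemma Fc_eq_A {L : ℕ} (δ : ℝ) {x z : ℕ} (h2 : 2 ≤ x) (hxL : x ≤ L - 1) (hL : 3 ≤ L)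
    (hz : z ∈ Finset.Icc 1 L) :
    Fc L δ x z = if z = x + 1 then -((Real.sin δ : ℝ) : ℂ)/2
      else if z = x - 1 then ((Real.sin δ : ℝ) : ℂ)/2 else 0 := by
  have hz' := Finset.mem_Icc.mp hz
  simp only [Fc, true_and, and_true]
  split_ifs <;> first | ring1 | (exfalso; omega)

lemma Fc_eq_B {L : ℕ} (δ : ℝ) {z : ℕ} (hL : 3 ≤ L) (hz : z ∈ Finset.Icc 1 L) :
    Fc L δ 1 z = if z = 2 then -((Real.sin δ : ℝ) : ℂ)/2
      else if z = L then -((Real.sin δ : ℝ) : ℂ)/2 else 0 := by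
  have hz' := Finset.mem_Icc.mp hz
  simp only [Fc, true_and, and_true]
  split_ifs <;> first | ring1 | (exfalso; omega)

end S8aux
namespace S8aux
open Finset
section
variable {V : Type*} [AddCommGroup V] [Module ℂ V]


lemma inv_pair {S w1 w2 : ℂ} (hs : S ≠ 0) (h : w1 * w2 = S/2) :
    w2 * (S⁻¹ * w1) - w1 * (-(S⁻¹ * w2)) = 1 := by
  field_simp
  linear_combination 2*h

lemma inv_two {S w : ℂ} (hs : S ≠ 0) : S * ((S⁻¹*w) - (-(S⁻¹*w))) = 2*w := by
  field_simp; ring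

lemma inv_two' {S w : ℂ} (hs : S ≠ 0) : S * ((S⁻¹*w) + (S⁻¹*w)) = 2*w := by
  field_simp; ring

lemma chi_eval {L x y : ℕ} {δ : ℝ} (hs : ((Real.sin δ : ℝ) : ℂ) ≠ 0)
    (hwprod : ((wR δ x : ℝ) : ℂ) * ((wR δ (x+1) : ℝ) : ℂ) = ((Real.sin δ : ℝ) : ℂ)/2)
    (hx1 : 1 ≤ x) (hxL : x + 1 ≤ L) (hy1 : 1 ≤ y) (hyL : y ≤ L) :
    ((wR δ (x+1) : ℝ) : ℂ) * cf L δ y x - ((wR δ x : ℝ) : ℂ) * cf L δ y (x+1)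
      = if y = x then 1 else 0 := by
  simp only [cf]
  split_ifs <;> first
    | ring1
    | (exfalso; omega)
    | (exact inv_pair hs hwprod)

lemma cf_diff {L x y : ℕ} {δ : ℝ} (hs : ((Real.sin δ : ℝ) : ℂ) ≠ 0) (h2 : 2 ≤ x)
    (hxL : x ≤ L - 1) (hL : 3 ≤ L) (hy : y ∈ Finset.Icc 1 L) :
    ((Real.sin δ : ℝ) : ℂ) * (cf L δ (x+1) y - cf L δ (x-1) y) = 2 * bcf δ x y := by
  have hy' := Finset.mem_Icc.mp hy
  simp only [cf, bcf]
  split_ifs <;> first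
    | ring1
    | (exfalso; omega)
    | (subst_vars; first | exact inv_two hs | exact inv_two' hs)

lemma cf_sum {L y : ℕ} {δ : ℝ} (hs : ((Real.sin δ : ℝ) : ℂ) ≠ 0) (hL : 3 ≤ L)
    (hy : y ∈ Finset.Icc 1 L) :
    ((Real.sin δ : ℝ) : ℂ) * (cf L δ 2 y + cf L δ L y) = 2 * bcf δ 1 y := by
  have hy' := Finset.mem_Icc.mp hy
  simp only [cf, bcf]
  split_ifs <;> first
    | ring1
    | (exfalso; omega)
    | (subst_vars; first | exact inv_two hs | exact inv_two' hs)

lemma wprod (δ : ℝ) (x : ℕ) : wR δ x * wR δ (x+1) = Real.sin δ / 2 := by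
  have h := Real.sin_two_mul (δ/2)
  have e : 2*(δ/2) = δ := by ring
  rw [e] at h
  rcases Nat.even_or_odd x with he | ho
  · have h1 : ¬ Odd x := by simp [Nat.not_odd_iff_even, he]
    have h2 : Odd (x+1) := Even.add_one he
    rw [wR, wR, if_neg h1, if_pos h2, h]; ring
  · have h2 : ¬ Odd (x+1) := by simp [Nat.odd_add_one, ho]
    rw [wR, wR, if_pos ho, if_neg h2, h]; ring

lemma wsq (δ : ℝ) (x : ℕ) : wR δ x ^ 2 + wR δ (x+1) ^ 2 = 1 := by
  rcases Nat.even_or_odd x with he | ho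
  · have h1 : ¬ Odd x := by simp [Nat.not_odd_iff_even, he]
    have h2 : Odd (x+1) := Even.add_one he
    rw [wR, wR, if_neg h1, if_pos h2]
    rw [add_comm]; exact Real.sin_sq_add_cos_sq (δ/2)
  · have h2 : ¬ Odd (x+1) := by simp [Nat.odd_add_one, ho]
    rw [wR, wR, if_pos ho, if_neg h2]
    exact Real.sin_sq_add_cos_sq (δ/2)

lemma cos_hc (δ : ℝ) : Real.cos δ = 2 * Real.cos (δ/2)^2 - 1 := by
  have h := Real.cos_two_mul (δ/2)
  have e : 2*(δ/2) = δ := by ring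
  rw [e] at h; exact h

lemma cos_hs (δ : ℝ) : Real.cos δ = 1 - 2 * Real.sin (δ/2)^2 := by
  have h := cos_hc δ
  have h2 := Real.sin_sq_add_cos_sq (δ/2)
  nlinarith [h, h2]

lemma muId1 (Vv δ : ℝ) (x : ℕ) : Vv * wR δ (x+1)^2 = -(muPot Vv δ x) := by
  rcases Nat.even_or_odd x with he | ho
  · rw [muPot, wR, if_pos (Even.add_one he), he.neg_one_pow, cos_hs δ]; ring
  · have h2 : ¬ Odd (x+1) := by simp [Nat.odd_add_one, ho]
    rw [muPot, wR, if_neg h2, ho.neg_one_pow, cos_hc δ]; ring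

lemma muId2 (Vv δ : ℝ) (x : ℕ) : Vv * wR δ x^2 = -(muPot Vv δ (x+1)) := by
  rcases Nat.even_or_odd x with he | ho
  · have h1 : ¬ Odd x := by simp [Nat.not_odd_iff_even, he]
    rw [muPot, wR, if_neg h1, (Even.add_one he).neg_one_pow, cos_hc δ]; ring
  · rw [muPot, wR, if_pos ho, (Odd.add_one ho).neg_one_pow, cos_hs δ]; ring

lemma twosite {R : Type*} [Ring R] [Algebra ℂ R] (a b2 A B : R) (u v : ℂ)
    (huv : u*u + v*v = 1)
    (hA2 : A * A = 0) (hB2 : B * B = 0)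
    (hAB : A * B = -(B * A))
    (ha2 : a * a = 0) (hb2 : b2 * b2 = 0)
    (hab : a * b2 = -(b2 * a))
    (haB : a * B = -(B * a)) :
    (u • A - v • B) * (((1 - A * a) * (1 - B * b2)) * (u • a - v • b2))
      = (u • A - v • B) * (u • a - v • b2) - (A * a) * (B * b2) := by
  have e1 : (A * a) * (u • a - v • b2) = -(v • (A * (a * b2))) := by
    rw [mul_sub, mul_smul_comm, mul_smul_comm, mul_assoc, mul_assoc, ha2, mul_zero, smul_zero,
      zero_sub]
  have e2 : (B * b2) * (u • a - v • b2) = u • (B * (b2 * a)) := by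
    rw [mul_sub, mul_smul_comm, mul_smul_comm, mul_assoc, mul_assoc, hb2, mul_zero, smul_zero,
      sub_zero]
  have h4 : a * (b2 * a) = 0 := by
    rw [← mul_assoc, hab, neg_mul, mul_assoc, ha2, mul_zero, neg_zero]
  have h5 : a * (B * (b2 * a)) = 0 := by
    rw [← mul_assoc, haB, neg_mul, mul_assoc, h4, mul_zero, neg_zero]
  have e3 : (A * a) * (B * (b2 * a)) = 0 := by
    rw [mul_assoc, h5, mul_zero]
  have c1 : (1 - B * b2) * (u • a - v • b2) = (u • a - v • b2) - u • (B * (b2 * a)) := by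
    rw [sub_mul, one_mul, e2]
  have c2 : ((1 - A * a) * (1 - B * b2)) * (u • a - v • b2)
      = ((u • a - v • b2) + v • (A * (a * b2))) - u • (B * (b2 * a)) := by
    rw [mul_assoc, c1, mul_sub, sub_mul, sub_mul, one_mul, one_mul, e1, mul_smul_comm, e3,
      smul_zero, sub_zero]
    abel
  rw [c2]
  have hBA : B * A = -(A * B) := by rw [hAB, neg_neg]
  have e4 : (u • A - v • B) * (A * (a * b2)) = -(v • (B * (A * (a * b2)))) := by
    rw [sub_mul, smul_mul_assoc, smul_mul_assoc, ← mul_assoc, hA2, zero_mul, smul_zero, zero_sub]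
  have e5 : (u • A - v • B) * (B * (b2 * a)) = u • (A * (B * (b2 * a))) := by
    rw [sub_mul, smul_mul_assoc, smul_mul_assoc, ← mul_assoc B B, hB2, zero_mul, smul_zero,
      sub_zero]
  have h6 : B * (A * (a * b2)) = A * (B * (b2 * a)) := by
    rw [hab, mul_neg, mul_neg, ← mul_assoc, hBA, neg_mul, neg_neg, mul_assoc]
  have h7 : (A * a) * (B * b2) = A * (B * (b2 * a)) := by
    calc (A * a) * (B * b2) = A * ((a * B) * b2) := by rw [mul_assoc, ← mul_assoc a B b2]
    _ = -(A * (B * (a * b2))) := by rw [haB, neg_mul, mul_neg, mul_assoc]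
    _ = A * (B * (b2 * a)) := by rw [hab, mul_neg, mul_neg, neg_neg]
  rw [mul_sub, mul_add, mul_smul_comm, mul_smul_comm, e4, e5, h6, h7, smul_neg, smul_smul,
    smul_smul]
  match_scalars <;> first | ring1 | linear_combination -huv

lemma comm_zeta {L : ℕ} {δ : ℝ} (d : ℕ → Module.End ℂ V) (q : Module.End ℂ V) (χ : ℕ → ℂ)
    (hqT : ∀ y ∈ Finset.Icc 1 L, q * taOp L δ d y = χ y • 1 - taOp L δ d y * q) :
    q * zetaDag L δ d = zetaDag L δ d * q
      + ∑ y ∈ Finset.Icc 1 L, ∑ z ∈ Finset.Icc 1 L,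
          Fc L δ y z • (χ y • taOp L δ d z - χ z • taOp L δ d y) := by
  rw [zetaDag, Finset.mul_sum, Finset.sum_mul, ← Finset.sum_add_distrib]
  refine Finset.sum_congr rfl fun y hy => ?_
  rw [Finset.mul_sum, Finset.sum_mul, ← Finset.sum_add_distrib]
  refine Finset.sum_congr rfl fun z hz => ?_
  have h1 : q * (taOp L δ d y * taOp L δ d z)
      = (χ y • taOp L δ d z - χ z • taOp L δ d y) + (taOp L δ d y * taOp L δ d z) * q := by
    rw [← mul_assoc, hqT y hy, sub_mul, smul_mul_assoc, one_mul, mul_assoc, hqT z hz, mul_sub,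
      mul_smul_comm, mul_one, ← mul_assoc]
    abel
  rw [mul_smul_comm, h1, smul_add, smul_mul_assoc]
  exact add_comm _ _

lemma Ee_comm_zeta {L : ℕ} {δ : ℝ} (d : ℕ → Module.End ℂ V)
    (hdd : ∀ y ∈ Finset.Icc 1 L, ∀ z ∈ Finset.Icc 1 L, d y * d z + d z * d y = 0)
    (g : ℕ → ℂ) : Ee L d g * zetaDag L δ d = zetaDag L δ d * Ee L d g := by
  rw [zetaDag, Finset.mul_sum, Finset.sum_mul]
  refine Finset.sum_congr rfl fun y hy => ?_
  rw [Finset.mul_sum, Finset.sum_mul]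
  refine Finset.sum_congr rfl fun z hz => ?_
  have hy' := Finset.mem_Icc.mp hy; have hz' := Finset.mem_Icc.mp hz
  rw [mul_smul_comm, smul_mul_assoc]
  congr 1
  rw [taOp_eq d hy'.1 hy'.2, taOp_eq d hz'.1 hz'.2, ← mul_assoc,
    Ee_anticomm d hdd g (cf L δ y), neg_mul, mul_assoc, Ee_anticomm d hdd g (cf L δ z),
    mul_neg, neg_neg, mul_assoc]

lemma Pkill {L : ℕ} (d a : ℕ → Module.End ℂ V) {x : ℕ} (δ : ℝ)
    (hdd : ∀ y ∈ Finset.Icc 1 L, ∀ z ∈ Finset.Icc 1 L, d y * d z + d z * d y = 0)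
    (had : ∀ y ∈ Finset.Icc 1 L, ∀ z ∈ Finset.Icc 1 L,
      a y * d z + d z * a y = if z = y then 1 else 0)
    (hx : x ∈ Finset.Icc 1 L) (hx1 : x + 1 ∈ Finset.Icc 1 L) (f : ℕ → ℂ) :
    ((1 - d x * a x) * (1 - d (x+1) * a (x+1))) * (Ee L d f * Ee L d (bcf δ x)) = 0 := by
  have hsq : ∀ y ∈ Finset.Icc 1 L, d y * d y = 0 := fun y hy => half (hdd y hy y hy)
  have hk : ∀ y ∈ Finset.Icc 1 L, (1 - d y * a y) * d y = 0 := by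
    intro y hy
    have h := had y hy y hy
    rw [if_pos rfl] at h
    have h2 : a y * d y = 1 - d y * a y := eq_sub_of_add_eq h
    rw [sub_mul, one_mul, mul_assoc, h2, mul_sub, mul_one, ← mul_assoc, hsq y hy, zero_mul,
      sub_zero, sub_self]
  have hcomm : ∀ y ∈ Finset.Icc 1 L, ∀ z ∈ Finset.Icc 1 L, y ≠ z →
      (d z * a z) * d y = d y * (d z * a z) := by
    intro y hy z hz hyz
    have h1 : a z * d y = -(d y * a z) := by
      have h := had z hz y hy
      rw [if_neg hyz] at h
      exact eq_neg_of_add_eq_zero_left h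
    have h2 : d z * d y = -(d y * d z) := eq_neg_of_add_eq_zero_left (hdd z hz y hy)
    rw [mul_assoc, h1, mul_neg, ← mul_assoc, h2, neg_mul, neg_neg, mul_assoc]
  have hPd : ∀ y ∈ Finset.Icc 1 L,
      ((1 - d x * a x) * (1 - d (x+1) * a (x+1))) * d y
      = if y = x ∨ y = x + 1 then 0
        else d y * ((1 - d x * a x) * (1 - d (x+1) * a (x+1))) := by
    intro y hy
    by_cases h1 : y = x
    · subst h1
      rw [if_pos (Or.inl rfl)]
      have hc : (1 - d (y+1) * a (y+1)) * d y = d y * (1 - d (y+1) * a (y+1)) := by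
        rw [sub_mul, mul_sub, one_mul, mul_one, hcomm y hy (y+1) hx1 (by omega)]
      rw [mul_assoc, hc, ← mul_assoc, hk y hy, zero_mul]
    · by_cases h2 : y = x + 1
      · subst h2
        rw [if_pos (Or.inr rfl)]
        rw [mul_assoc, hk (x+1) hx1, mul_zero]
      · rw [if_neg (by tauto)]
        have hcx : (1 - d x * a x) * d y = d y * (1 - d x * a x) := by
          rw [sub_mul, mul_sub, one_mul, mul_one, hcomm y hy x hx h1]
        have hcx1 : (1 - d (x+1) * a (x+1)) * d y = d y * (1 - d (x+1) * a (x+1)) := by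
          rw [sub_mul, mul_sub, one_mul, mul_one, hcomm y hy (x+1) hx1 h2]
        rw [mul_assoc, hcx1, ← mul_assoc, hcx, mul_assoc]
  have hPB : ((1 - d x * a x) * (1 - d (x+1) * a (x+1))) * Ee L d (bcf δ x) = 0 := by
    rw [Ee_two d δ hx hx1, mul_add, mul_smul_comm, mul_smul_comm]
    have t1 := hPd x hx; rw [if_pos (Or.inl rfl)] at t1
    have t2 := hPd (x+1) hx1; rw [if_pos (Or.inr rfl)] at t2
    rw [t1, t2, smul_zero, smul_zero, add_zero]
  have hEf : Ee L d f = ∑ y ∈ Finset.Icc 1 L, f y • d y := rfl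
  rw [hEf, Finset.sum_mul, Finset.mul_sum]
  refine Finset.sum_eq_zero fun y hy => ?_
  rw [smul_mul_assoc, mul_smul_comm]
  by_cases hcase : y = x ∨ y = x + 1
  · have hh := hPd y hy; rw [if_pos hcase] at hh
    rw [← mul_assoc, hh, zero_mul, smul_zero]
  · have hh := hPd y hy; rw [if_neg hcase] at hh
    rw [← mul_assoc, hh, mul_assoc, hPB, mul_zero, smul_zero]

end
end S8aux
namespace S8aux
open Finset
section
variable {V : Type*} [AddCommGroup V] [Module ℂ V]

lemma q_comm_zeta {L : ℕ} {δ : ℝ} (d : ℕ → Module.End ℂ V) (q : Module.End ℂ V)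
    (hqT : ∀ y ∈ Finset.Icc 1 L, q * taOp L δ d y = -(taOp L δ d y * q)) :
    q * zetaDag L δ d = zetaDag L δ d * q := by
  rw [zetaDag, Finset.mul_sum, Finset.sum_mul]
  refine Finset.sum_congr rfl fun y hy => ?_
  rw [Finset.mul_sum, Finset.sum_mul]
  refine Finset.sum_congr rfl fun z hz => ?_
  rw [mul_smul_comm, smul_mul_assoc]
  congr 1
  rw [← mul_assoc, hqT y hy, neg_mul, mul_assoc, hqT z hz, mul_neg, neg_neg, mul_assoc]

end
end S8aux
namespace S8aux
open Finset
section
variable {V : Type*} [AddCommGroup V] [Module ℂ V]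

set_option maxHeartbeats 1000000 in
lemma upspin {L : ℕ} (hL3 : 3 ≤ L) (δ t Vv : ℝ)
    (hs : ((Real.sin δ : ℝ) : ℂ) ≠ 0)
    (d a : ℕ → Module.End ℂ V)
    (hdd : ∀ y ∈ Finset.Icc 1 L, ∀ z ∈ Finset.Icc 1 L, d y * d z + d z * d y = 0)
    (haa : ∀ y ∈ Finset.Icc 1 L, ∀ z ∈ Finset.Icc 1 L, a y * a z + a z * a y = 0)
    (had : ∀ y ∈ Finset.Icc 1 L, ∀ z ∈ Finset.Icc 1 L,
      a y * d z + d z * a y = if z = y then 1 else 0)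
    (Φ0 : V) (hΦ0 : ∀ y ∈ Finset.Icc 1 L, a y Φ0 = 0)
    (x : ℕ) (hx1 : 1 ≤ x) (hxL : x ≤ L - 1) (Np : ℕ)
    (htt : (t : ℂ) = (Vv : ℂ) * (((wR δ x : ℝ) : ℂ) * ((wR δ (x+1) : ℝ) : ℂ))) :
    ((-(t : ℂ)) • (d x * a (x+1) + d (x+1) * a x)
      - ((muPot Vv δ x : ℝ) : ℂ) • (d x * a x)
      - ((muPot Vv δ (x+1) : ℝ) : ℂ) • (d (x+1) * a (x+1))
      - ((Vv : ℝ) : ℂ) • ((d x * a x) * (d (x+1) * a (x+1))))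
      ((taOp L δ d L) (((zetaDag L δ d) ^ Np) Φ0)) = 0 := by
  have hxI : x ∈ Finset.Icc 1 L := Finset.mem_Icc.mpr ⟨hx1, by omega⟩
  have hx1I : x + 1 ∈ Finset.Icc 1 L := Finset.mem_Icc.mpr ⟨by omega, by omega⟩
  have hLI : L ∈ Finset.Icc 1 L := Finset.mem_Icc.mpr ⟨by omega, le_rfl⟩
  have hwprodC : ((wR δ x : ℝ) : ℂ) * ((wR δ (x+1) : ℝ) : ℂ) = ((Real.sin δ : ℝ) : ℂ) / 2 := by
    rw [← Complex.ofReal_mul, wprod δ x]; push_cast; ring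
  have huv : ((wR δ (x+1) : ℝ) : ℂ) * ((wR δ (x+1) : ℝ) : ℂ) + ((wR δ x : ℝ) : ℂ) * ((wR δ x : ℝ) : ℂ) = 1 := by
    have hC : ((wR δ x : ℝ) : ℂ)^2 + ((wR δ (x+1) : ℝ) : ℂ)^2 = 1 := by exact_mod_cast wsq δ x
    linear_combination hC
  have hA2 : d x * d x = 0 := half (hdd x hxI x hxI)
  have hB2 : d (x+1) * d (x+1) = 0 := half (hdd (x+1) hx1I (x+1) hx1I)
  have hAB : d x * d (x+1) = -(d (x+1) * d x) :=
    eq_neg_of_add_eq_zero_left (hdd x hxI (x+1) hx1I)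
  have ha2 : a x * a x = 0 := half (haa x hxI x hxI)
  have hb2 : a (x+1) * a (x+1) = 0 := half (haa (x+1) hx1I (x+1) hx1I)
  have hab : a x * a (x+1) = -(a (x+1) * a x) :=
    eq_neg_of_add_eq_zero_left (haa x hxI (x+1) hx1I)
  have haB : a x * d (x+1) = -(d (x+1) * a x) := by
    have h := had x hxI (x+1) hx1I
    rw [if_neg (by omega : ¬ x + 1 = x)] at h
    exact eq_neg_of_add_eq_zero_left h
  have hts := twosite (a x) (a (x+1)) (d x) (d (x+1)) ((wR δ (x+1) : ℝ) : ℂ) ((wR δ x : ℝ) : ℂ)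
    huv hA2 hB2 hAB ha2 hb2 hab haB
  -- operator identity
  have hOp : ((-(t : ℂ)) • (d x * a (x+1) + d (x+1) * a x)
      - ((muPot Vv δ x : ℝ) : ℂ) • (d x * a x)
      - ((muPot Vv δ (x+1) : ℝ) : ℂ) • (d (x+1) * a (x+1))
      - ((Vv : ℝ) : ℂ) • ((d x * a x) * (d (x+1) * a (x+1))))
      = ((Vv : ℝ) : ℂ) • ((((wR δ (x+1) : ℝ) : ℂ) • d x - ((wR δ x : ℝ) : ℂ) • d (x+1)) * (((1 - d x * a x) * (1 - d (x+1) * a (x+1))) * (((wR δ (x+1) : ℝ) : ℂ) • a x - ((wR δ x : ℝ) : ℂ) • a (x+1)))) := by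
    rw [hts]
    have hexp : (((wR δ (x+1) : ℝ) : ℂ) • d x - ((wR δ x : ℝ) : ℂ) • d (x+1)) * (((wR δ (x+1) : ℝ) : ℂ) • a x - ((wR δ x : ℝ) : ℂ) • a (x+1)) = (((wR δ (x+1) : ℝ) : ℂ)*((wR δ (x+1) : ℝ) : ℂ)) • (d x * a x) - (((wR δ (x+1) : ℝ) : ℂ)*((wR δ x : ℝ) : ℂ)) • (d x * a (x+1))
        - (((wR δ x : ℝ) : ℂ)*((wR δ (x+1) : ℝ) : ℂ)) • (d (x+1) * a x) + (((wR δ x : ℝ) : ℂ)*((wR δ x : ℝ) : ℂ)) • (d (x+1) * a (x+1)) := by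
      simp only [sub_mul, mul_sub, smul_mul_smul_comm]
      abel
    rw [hexp]
    have hr1 : muPot Vv δ x = -(Vv * wR δ (x+1)^2) := by linarith [muId1 Vv δ x]
    have hr2 : muPot Vv δ (x+1) = -(Vv * wR δ x^2) := by linarith [muId2 Vv δ x]
    have hμ1C : ((muPot Vv δ x : ℝ) : ℂ) = -(((Vv : ℝ) : ℂ) * (((wR δ (x+1) : ℝ) : ℂ)*((wR δ (x+1) : ℝ) : ℂ))) := by
      rw [hr1]; push_cast; ring
    have hμ2C : ((muPot Vv δ (x+1) : ℝ) : ℂ) = -(((Vv : ℝ) : ℂ) * (((wR δ x : ℝ) : ℂ)*((wR δ x : ℝ) : ℂ))) := by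
      rw [hr2]; push_cast; ring
    rw [hμ1C, hμ2C, htt]
    match_scalars <;> ring1
  -- anticommutation of bb with site operators
  have hq : ∀ z ∈ Finset.Icc 1 L, (((wR δ (x+1) : ℝ) : ℂ) • a x - ((wR δ x : ℝ) : ℂ) • a (x+1)) * d z
      = ((((wR δ (x+1) : ℝ) : ℂ) * (if z = x then (1:ℂ) else 0)) - ((wR δ x : ℝ) : ℂ) * (if z = x+1 then (1:ℂ) else 0)) • 1
        - d z * (((wR δ (x+1) : ℝ) : ℂ) • a x - ((wR δ x : ℝ) : ℂ) • a (x+1)) := by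
    intro z hz
    have hconv : ∀ (p : Prop) (inst : Decidable p),
        (if p then (1:Module.End ℂ V) else 0) = (if p then (1:ℂ) else 0) • 1 := by
      intro p inst; split_ifs <;> simp
    have h1 : a x * d z = (if z = x then (1:ℂ) else 0) • 1 - d z * a x := by
      have h := eq_sub_of_add_eq (had x hxI z hz)
      rw [h, hconv]
    have h2 : a (x+1) * d z = (if z = x+1 then (1:ℂ) else 0) • 1 - d z * a (x+1) := by
      have h := eq_sub_of_add_eq (had (x+1) hx1I z hz)
      rw [h, hconv]
    rw [sub_mul, smul_mul_assoc, smul_mul_assoc, h1, h2, mul_sub, mul_smul_comm,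
      mul_smul_comm]
    module
  have hbT : ∀ y ∈ Finset.Icc 1 L, (((wR δ (x+1) : ℝ) : ℂ) • a x - ((wR δ x : ℝ) : ℂ) • a (x+1)) * taOp L δ d y
      = (fun y => if y = x then (1:ℂ) else 0) y • 1 - taOp L δ d y * (((wR δ (x+1) : ℝ) : ℂ) • a x - ((wR δ x : ℝ) : ℂ) • a (x+1)) := by
    intro y hy
    have hy' := Finset.mem_Icc.mp hy
    rw [taOp_eq d hy'.1 hy'.2, q_mul_Ee d (((wR δ (x+1) : ℝ) : ℂ) • a x - ((wR δ x : ℝ) : ℂ) • a (x+1)) _ hq (cf L δ y)]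
    have hsum : (∑ z ∈ Finset.Icc 1 L, cf L δ y z *
        ((((wR δ (x+1) : ℝ) : ℂ) * (if z = x then (1:ℂ) else 0)) - ((wR δ x : ℝ) : ℂ) * (if z = x+1 then (1:ℂ) else 0)))
        = (if y = x then (1:ℂ) else 0) := by
      have hrw : ∀ z ∈ Finset.Icc 1 L, cf L δ y z *
          ((((wR δ (x+1) : ℝ) : ℂ) * (if z = x then (1:ℂ) else 0)) - ((wR δ x : ℝ) : ℂ) * (if z = x+1 then (1:ℂ) else 0))
          = (if z = x then ((wR δ (x+1) : ℝ) : ℂ) * cf L δ y z else 0)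
            - (if z = x+1 then ((wR δ x : ℝ) : ℂ) * cf L δ y z else 0) := by
        intro z hz; split_ifs <;> ring
      rw [Finset.sum_congr rfl hrw, Finset.sum_sub_distrib,
        Finset.sum_ite_eq' _ x (fun z => ((wR δ (x+1) : ℝ) : ℂ) * cf L δ y z),
        Finset.sum_ite_eq' _ (x+1) (fun z => ((wR δ x : ℝ) : ℂ) * cf L δ y z), if_pos hxI, if_pos hx1I]
      exact chi_eval hs hwprodC hx1 (by omega) hy'.1 hy'.2
    rw [hsum]
  -- the key sum D1
  have hD1 : (∑ z ∈ Finset.Icc 1 L, Fc L δ x z • taOp L δ d z) = -(Ee L d (bcf δ x)) := by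
    rcases eq_or_ne x 1 with rfl | hxne
    · have hrw : ∀ z ∈ Finset.Icc 1 L, Fc L δ 1 z • taOp L δ d z
          = if z = 2 then (-((Real.sin δ : ℝ) : ℂ)/2) • taOp L δ d z
            else if z = L then (-((Real.sin δ : ℝ) : ℂ)/2) • taOp L δ d z else 0 := by
        intro z hz; rw [Fc_eq_B δ hL3 hz]; split_ifs <;> simp
      rw [Finset.sum_congr rfl hrw,
        sum_pair_ite (Finset.mem_Icc.mpr ⟨by omega, by omega⟩) hLI (by omega) _ _]
      have hT2 : taOp L δ d 2 = Ee L d (cf L δ 2) := taOp_eq d (by omega) (by omega)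
      have hTL2 : taOp L δ d L = Ee L d (cf L δ L) := taOp_eq d (by omega) le_rfl
      have hkey : ((Real.sin δ : ℝ) : ℂ) • (Ee L d (cf L δ 2) + Ee L d (cf L δ L)) = (2:ℂ) • Ee L d (bcf δ 1) := by
        rw [← Ee_add, ← Ee_mulc, Ee_congr d (fun y hy => cf_sum hs hL3 hy), Ee_mulc]
      rw [hT2, hTL2]
      calc (-((Real.sin δ : ℝ) : ℂ)/2) • Ee L d (cf L δ 2) + (-((Real.sin δ : ℝ) : ℂ)/2) • Ee L d (cf L δ L)
          = (-(1:ℂ)/2) • (((Real.sin δ : ℝ) : ℂ) • (Ee L d (cf L δ 2) + Ee L d (cf L δ L))) := by module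
        _ = (-(1:ℂ)/2) • ((2:ℂ) • Ee L d (bcf δ 1)) := by rw [hkey]
        _ = -(Ee L d (bcf δ 1)) := by module
    · have hx2 : 2 ≤ x := by omega
      have hrw : ∀ z ∈ Finset.Icc 1 L, Fc L δ x z • taOp L δ d z
          = if z = x+1 then (-((Real.sin δ : ℝ) : ℂ)/2) • taOp L δ d z
            else if z = x-1 then (((Real.sin δ : ℝ) : ℂ)/2) • taOp L δ d z else 0 := by
        intro z hz; rw [Fc_eq_A δ hx2 hxL hL3 hz]; split_ifs <;> simp
      rw [Finset.sum_congr rfl hrw,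
        sum_pair_ite hx1I (Finset.mem_Icc.mpr ⟨by omega, by omega⟩) (by omega) _ _]
      have hT1 : taOp L δ d (x+1) = Ee L d (cf L δ (x+1)) := taOp_eq d (by omega) (by omega)
      have hT0 : taOp L δ d (x-1) = Ee L d (cf L δ (x-1)) := taOp_eq d (by omega) (by omega)
      have hkey : ((Real.sin δ : ℝ) : ℂ) • (Ee L d (cf L δ (x+1)) - Ee L d (cf L δ (x-1)))
          = (2:ℂ) • Ee L d (bcf δ x) := by
        rw [← Ee_sub, ← Ee_mulc, Ee_congr d (fun y hy => cf_diff hs hx2 hxL hL3 hy), Ee_mulc]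
      rw [hT1, hT0]
      calc (-((Real.sin δ : ℝ) : ℂ)/2) • Ee L d (cf L δ (x+1)) + (((Real.sin δ : ℝ) : ℂ)/2) • Ee L d (cf L δ (x-1))
          = (-(1:ℂ)/2) • (((Real.sin δ : ℝ) : ℂ) • (Ee L d (cf L δ (x+1)) - Ee L d (cf L δ (x-1)))) := by module
        _ = (-(1:ℂ)/2) • ((2:ℂ) • Ee L d (bcf δ x)) := by rw [hkey]
        _ = -(Ee L d (bcf δ x)) := by module
  -- commutator with ζ
  have hbζ : (((wR δ (x+1) : ℝ) : ℂ) • a x - ((wR δ x : ℝ) : ℂ) • a (x+1)) * (zetaDag L δ d) = (zetaDag L δ d) * (((wR δ (x+1) : ℝ) : ℂ) • a x - ((wR δ x : ℝ) : ℂ) • a (x+1)) - (2:ℂ) • (Ee L d (bcf δ x)) := by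
    rw [comm_zeta d (((wR δ (x+1) : ℝ) : ℂ) • a x - ((wR δ x : ℝ) : ℂ) • a (x+1)) (fun y => if y = x then (1:ℂ) else 0) hbT]
    have hDS : (∑ y ∈ Finset.Icc 1 L, ∑ z ∈ Finset.Icc 1 L,
        Fc L δ y z • ((fun y => if y = x then (1:ℂ) else 0) y • taOp L δ d z - (fun y => if y = x then (1:ℂ) else 0) z • taOp L δ d y)) = -((2:ℂ) • (Ee L d (bcf δ x))) := by
      have hsplit : ∀ y ∈ Finset.Icc 1 L, ∀ z ∈ Finset.Icc 1 L,
          Fc L δ y z • ((fun y => if y = x then (1:ℂ) else 0) y • taOp L δ d z - (fun y => if y = x then (1:ℂ) else 0) z • taOp L δ d y)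
          = (if y = x then Fc L δ y z • taOp L δ d z else 0)
            - (if z = x then Fc L δ y z • taOp L δ d y else 0) := by
        intro y hy z hz; dsimp only; split_ifs <;> simp [smul_sub]
      rw [Finset.sum_congr rfl (fun y hy => Finset.sum_congr rfl (fun z hz => hsplit y hy z hz))]
      simp only [Finset.sum_sub_distrib]
      have hpull : ∀ y ∈ Finset.Icc 1 L,
          (∑ z ∈ Finset.Icc 1 L, if y = x then Fc L δ y z • taOp L δ d z else 0)
          = if y = x then (∑ z ∈ Finset.Icc 1 L, Fc L δ y z • taOp L δ d z) else 0 := by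
        intro y _; split_ifs <;> simp
      have hinner : ∀ y ∈ Finset.Icc 1 L,
          (∑ z ∈ Finset.Icc 1 L, if z = x then Fc L δ y z • taOp L δ d y else 0)
          = Fc L δ y x • taOp L δ d y := by
        intro y _
        rw [Finset.sum_ite_eq' _ x (fun z => Fc L δ y z • taOp L δ d y), if_pos hxI]
      rw [Finset.sum_congr rfl hpull, Finset.sum_ite_eq' _ x
        (fun y => ∑ z ∈ Finset.Icc 1 L, Fc L δ y z • taOp L δ d z), if_pos hxI,
        Finset.sum_congr rfl hinner]
      have hanti : (∑ y ∈ Finset.Icc 1 L, Fc L δ y x • taOp L δ d y)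
          = -∑ y ∈ Finset.Icc 1 L, Fc L δ x y • taOp L δ d y := by
        rw [← Finset.sum_neg_distrib]
        exact Finset.sum_congr rfl fun y hy => by
          rw [Fc_antisymm hL3 δ hxI hy, neg_smul]
      rw [hanti, hD1]
      module
    rw [hDS]
    abel
  have hBζc : (Ee L d (bcf δ x)) * (zetaDag L δ d) = (zetaDag L δ d) * (Ee L d (bcf δ x)) := Ee_comm_zeta d hdd (bcf δ x)
  have hbn : ∀ N : ℕ, (((wR δ (x+1) : ℝ) : ℂ) • a x - ((wR δ x : ℝ) : ℂ) • a (x+1)) * (zetaDag L δ d)^(N+1)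
      = (zetaDag L δ d)^(N+1) * (((wR δ (x+1) : ℝ) : ℂ) • a x - ((wR δ x : ℝ) : ℂ) • a (x+1)) - ((2:ℂ)*((N:ℂ)+1)) • ((Ee L d (bcf δ x)) * (zetaDag L δ d)^N) := by
    intro N
    induction N with
    | zero => rw [pow_one, pow_zero, mul_one, hbζ]; norm_num
    | succ M ih =>
      have hcomm : (zetaDag L δ d)^(M+1) * (Ee L d (bcf δ x)) = (Ee L d (bcf δ x)) * (zetaDag L δ d)^(M+1) :=
        ((show Commute (Ee L d (bcf δ x)) (zetaDag L δ d) from hBζc).pow_right (M+1)).symm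
      calc (((wR δ (x+1) : ℝ) : ℂ) • a x - ((wR δ x : ℝ) : ℂ) • a (x+1)) * (zetaDag L δ d)^(M+1+1) = ((((wR δ (x+1) : ℝ) : ℂ) • a x - ((wR δ x : ℝ) : ℂ) • a (x+1)) * (zetaDag L δ d)^(M+1)) * (zetaDag L δ d) := by rw [pow_succ, mul_assoc]
      _ = ((zetaDag L δ d)^(M+1) * (((wR δ (x+1) : ℝ) : ℂ) • a x - ((wR δ x : ℝ) : ℂ) • a (x+1))) * (zetaDag L δ d) - ((2:ℂ)*((M:ℂ)+1)) • (((Ee L d (bcf δ x)) * (zetaDag L δ d)^M) * (zetaDag L δ d)) := by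
          rw [ih, sub_mul, smul_mul_assoc]
      _ = (zetaDag L δ d)^(M+1) * ((zetaDag L δ d) * (((wR δ (x+1) : ℝ) : ℂ) • a x - ((wR δ x : ℝ) : ℂ) • a (x+1)) - (2:ℂ) • (Ee L d (bcf δ x))) - ((2:ℂ)*((M:ℂ)+1)) • ((Ee L d (bcf δ x)) * (zetaDag L δ d)^(M+1)) := by
          rw [mul_assoc, hbζ, mul_assoc, ← pow_succ]
      _ = (zetaDag L δ d)^(M+1+1) * (((wR δ (x+1) : ℝ) : ℂ) • a x - ((wR δ x : ℝ) : ℂ) • a (x+1)) - (2:ℂ) • ((Ee L d (bcf δ x)) * (zetaDag L δ d)^(M+1))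
            - ((2:ℂ)*((M:ℂ)+1)) • ((Ee L d (bcf δ x)) * (zetaDag L δ d)^(M+1)) := by
          rw [mul_sub, mul_smul_comm, ← mul_assoc, ← pow_succ, hcomm]
      _ = (zetaDag L δ d)^(M+1+1) * (((wR δ (x+1) : ℝ) : ℂ) • a x - ((wR δ x : ℝ) : ℂ) • a (x+1)) - ((2:ℂ)*((M:ℂ)+1+1)) • ((Ee L d (bcf δ x)) * (zetaDag L δ d)^(M+1)) := by
          match_scalars <;> (push_cast; ring1)
      _ = (zetaDag L δ d)^(M+1+1) * (((wR δ (x+1) : ℝ) : ℂ) • a x - ((wR δ x : ℝ) : ℂ) • a (x+1)) - ((2:ℂ)*(((M+1 : ℕ):ℂ)+1)) • ((Ee L d (bcf δ x)) * (zetaDag L δ d)^(M+1)) := by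
          norm_cast
  have hbΦ0 : (((wR δ (x+1) : ℝ) : ℂ) • a x - ((wR δ x : ℝ) : ℂ) • a (x+1)) Φ0 = 0 := by
    have h : (((wR δ (x+1) : ℝ) : ℂ) • a x - ((wR δ x : ℝ) : ℂ) • a (x+1)) Φ0 = ((wR δ (x+1) : ℝ) : ℂ) • ((a x) Φ0) - ((wR δ x : ℝ) : ℂ) • ((a (x+1)) Φ0) := rfl
    rw [h, hΦ0 x hxI, hΦ0 (x+1) hx1I, smul_zero, smul_zero, sub_zero]
  have hbv : ∀ N : ℕ, (((wR δ (x+1) : ℝ) : ℂ) • a x - ((wR δ x : ℝ) : ℂ) • a (x+1)) (((zetaDag L δ d)^N) Φ0) = -(((2:ℂ)*(N:ℂ)) • ((Ee L d (bcf δ x)) (((zetaDag L δ d)^(N-1)) Φ0))) := by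
    intro N
    cases N with
    | zero =>
      have h : (((wR δ (x+1) : ℝ) : ℂ) • a x - ((wR δ x : ℝ) : ℂ) • a (x+1)) (((zetaDag L δ d)^0) Φ0) = (((wR δ (x+1) : ℝ) : ℂ) • a x - ((wR δ x : ℝ) : ℂ) • a (x+1)) Φ0 := by rw [pow_zero]; rfl
      rw [h, hbΦ0]
      norm_num
    | succ M =>
      have h : (((wR δ (x+1) : ℝ) : ℂ) • a x - ((wR δ x : ℝ) : ℂ) • a (x+1)) (((zetaDag L δ d)^(M+1)) Φ0)
          = ((zetaDag L δ d)^(M+1)) ((((wR δ (x+1) : ℝ) : ℂ) • a x - ((wR δ x : ℝ) : ℂ) • a (x+1)) Φ0) - ((2:ℂ)*((M:ℂ)+1)) • ((Ee L d (bcf δ x)) (((zetaDag L δ d)^M) Φ0)) :=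
        LinearMap.congr_fun (hbn M) Φ0
      rw [hbΦ0, map_zero, zero_sub] at h
      rw [show M + 1 - 1 = M from rfl, h]
      match_scalars <;> (push_cast; ring1)
  have hbTL : (((wR δ (x+1) : ℝ) : ℂ) • a x - ((wR δ x : ℝ) : ℂ) • a (x+1)) * (taOp L δ d L) = -((taOp L δ d L) * (((wR δ (x+1) : ℝ) : ℂ) • a x - ((wR δ x : ℝ) : ℂ) • a (x+1))) := by
    have h := hbT L hLI
    dsimp only at h
    rw [if_neg (by omega : ¬ L = x), zero_smul, zero_sub] at h
    exact h
  have hbΨ : (((wR δ (x+1) : ℝ) : ℂ) • a x - ((wR δ x : ℝ) : ℂ) • a (x+1)) ((taOp L δ d L) (((zetaDag L δ d) ^ Np) Φ0))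
      = ((2:ℂ)*(Np:ℂ)) • ((taOp L δ d L) ((Ee L d (bcf δ x)) (((zetaDag L δ d)^(Np-1)) Φ0))) := by
    have h1 : (((wR δ (x+1) : ℝ) : ℂ) • a x - ((wR δ x : ℝ) : ℂ) • a (x+1)) ((taOp L δ d L) (((zetaDag L δ d) ^ Np) Φ0)) = (-((taOp L δ d L) * (((wR δ (x+1) : ℝ) : ℂ) • a x - ((wR δ x : ℝ) : ℂ) • a (x+1)))) (((zetaDag L δ d) ^ Np) Φ0) := by
      rw [← hbTL]; rfl
    have h2 : (-((taOp L δ d L) * (((wR δ (x+1) : ℝ) : ℂ) • a x - ((wR δ x : ℝ) : ℂ) • a (x+1)))) (((zetaDag L δ d) ^ Np) Φ0) = -((taOp L δ d L) ((((wR δ (x+1) : ℝ) : ℂ) • a x - ((wR δ x : ℝ) : ℂ) • a (x+1)) (((zetaDag L δ d) ^ Np) Φ0))) := rfl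
    rw [h1, h2, hbv Np, map_neg, map_smul, neg_neg]
  have hkill : (((1 - d x * a x) * (1 - d (x+1) * a (x+1))) * ((taOp L δ d L) * (Ee L d (bcf δ x)))) = 0 := by
    rw [taOp_eq d (by omega : 1 ≤ L) le_rfl]
    exact Pkill d a δ hdd had hxI hx1I (cf L δ L)
  have hPz : ((1 - d x * a x) * (1 - d (x+1) * a (x+1))) ((taOp L δ d L) ((Ee L d (bcf δ x)) (((zetaDag L δ d)^(Np-1)) Φ0))) = 0 := by
    have h : ((1 - d x * a x) * (1 - d (x+1) * a (x+1))) ((taOp L δ d L) ((Ee L d (bcf δ x)) (((zetaDag L δ d)^(Np-1)) Φ0))) = (((1 - d x * a x) * (1 - d (x+1) * a (x+1))) * ((taOp L δ d L) * (Ee L d (bcf δ x)))) (((zetaDag L δ d)^(Np-1)) Φ0) := rfl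
    rw [h, hkill]; rfl
  have hfin : (((-(t : ℂ)) • (d x * a (x+1) + d (x+1) * a x)
      - ((muPot Vv δ x : ℝ) : ℂ) • (d x * a x)
      - ((muPot Vv δ (x+1) : ℝ) : ℂ) • (d (x+1) * a (x+1))
      - ((Vv : ℝ) : ℂ) • ((d x * a x) * (d (x+1) * a (x+1)))))
      ((taOp L δ d L) (((zetaDag L δ d) ^ Np) Φ0))
      = ((Vv : ℝ) : ℂ) • ((((wR δ (x+1) : ℝ) : ℂ) • d x - ((wR δ x : ℝ) : ℂ) • d (x+1)) (((1 - d x * a x) * (1 - d (x+1) * a (x+1))) ((((wR δ (x+1) : ℝ) : ℂ) • a x - ((wR δ x : ℝ) : ℂ) • a (x+1)) ((taOp L δ d L) (((zetaDag L δ d) ^ Np) Φ0))))) := by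
    rw [hOp]; rfl
  rw [hfin, hbΨ, map_smul, hPz, smul_zero, map_zero, smul_zero]

end
end S8aux
set_option maxHeartbeats 2000000 in
/-- for every `0 ≤ Np ≤ (L−1)/2` and arbitrary `U, J`, the state
`Φ_G = ã_{L,↑}† (ζ†)^{Np} Φ0` satisfies `H_x Φ_G = 0` for all `x ∈ {1,…,L−1}`;
in particular `H Φ_G = 0` for `H = Σ_{x=1}^{L−1} H_x`. -/
theorem statement8 (L : ℕ) (hL3 : 3 ≤ L) (hLodd : Odd L)
    (t Vv : ℝ) (ht : 0 < t) (htV : 2*t ≤ Vv)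
    (δ : ℝ) (hδ0 : 0 < δ) (hδ1 : δ ≤ Real.pi / 2) (hδ : Real.sin δ = 2*t/Vv)
    (U J : ℝ)
    (c cdag : ℕ → Bool → Module.End ℂ 𝓥)
    (car_cc : ∀ x ∈ Finset.Icc 1 L, ∀ y ∈ Finset.Icc 1 L, ∀ σ τ : Bool,
      c x σ * c y τ + c y τ * c x σ = 0)
    (car_dd : ∀ x ∈ Finset.Icc 1 L, ∀ y ∈ Finset.Icc 1 L, ∀ σ τ : Bool,
      cdag x σ * cdag y τ + cdag y τ * cdag x σ = 0)
    (car_dc : ∀ x ∈ Finset.Icc 1 L, ∀ y ∈ Finset.Icc 1 L, ∀ σ τ : Bool,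
      cdag x σ * c y τ + c y τ * cdag x σ = if x = y ∧ σ = τ then 1 else 0)
    (Φ0 : 𝓥) (hΦ0 : ∀ x ∈ Finset.Icc 1 L, ∀ σ : Bool, c x σ Φ0 = 0)
    (Np : ℕ) (hNp : Np ≤ (L-1)/2) :
    (∀ x ∈ Finset.Icc 1 (L-1),
        Hloc t Vv δ U J c cdag x
          (taOp L δ (fun y => cdag y true) L
            (((zetaDag L δ (fun y => cdag y true))^Np) Φ0)) = 0)
    ∧ (∑ x ∈ Finset.Icc 1 (L-1), Hloc t Vv δ U J c cdag x)
        (taOp L δ (fun y => cdag y true) L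
          (((zetaDag L δ (fun y => cdag y true))^Np) Φ0)) = 0 := by
  -- basic positivity
  have hV0 : 0 < Vv := lt_of_lt_of_le (by linarith) htV
  have hsR : 0 < Real.sin δ := by rw [hδ]; positivity
  have hs : ((Real.sin δ : ℝ) : ℂ) ≠ 0 := by
    exact_mod_cast Complex.ofReal_ne_zero.mpr (ne_of_gt hsR)
  -- CAR for the up spin
  have hdd : ∀ y ∈ Finset.Icc 1 L, ∀ z ∈ Finset.Icc 1 L,
      cdag y true * cdag z true + cdag z true * cdag y true = 0 :=
    fun y hy z hz => car_dd y hy z hz true true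
  have haa : ∀ y ∈ Finset.Icc 1 L, ∀ z ∈ Finset.Icc 1 L,
      c y true * c z true + c z true * c y true = 0 :=
    fun y hy z hz => car_cc y hy z hz true true
  have had : ∀ y ∈ Finset.Icc 1 L, ∀ z ∈ Finset.Icc 1 L,
      c y true * cdag z true + cdag z true * c y true = if z = y then 1 else 0 := by
    intro y hy z hz
    have h := car_dc z hz y hy true true
    rw [add_comm] at h
    simpa using h
  have hΦ0up : ∀ y ∈ Finset.Icc 1 L, c y true Φ0 = 0 := fun y hy => hΦ0 y hy true
  have hLI : L ∈ Finset.Icc 1 L := Finset.mem_Icc.mpr ⟨by omega, le_rfl⟩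
  -- anticommutation of down annihilators with up operators
  have hfc : ∀ z ∈ Finset.Icc 1 L, ∀ y ∈ Finset.Icc 1 L,
      c z false * c y true = -(c y true * c z false) :=
    fun z hz y hy => eq_neg_of_add_eq_zero_left (car_cc z hz y hy false true)
  have hfd : ∀ z ∈ Finset.Icc 1 L, ∀ y ∈ Finset.Icc 1 L,
      c z false * cdag y true = -(cdag y true * c z false) := by
    intro z hz y hy
    have h := car_dc y hy z hz true false
    rw [if_neg (by simp : ¬(y = z ∧ true = false))] at h
    rw [add_comm] at h
    exact eq_neg_of_add_eq_zero_left h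
  have pd_c : ∀ (w : 𝓥), (∀ z ∈ Finset.Icc 1 L, c z false w = 0) →
      ∀ y ∈ Finset.Icc 1 L, ∀ z ∈ Finset.Icc 1 L, c z false (c y true w) = 0 := by
    intro w hw y hy z hz
    have h : c z false (c y true w) = (c z false * c y true) w := rfl
    rw [h, hfc z hz y hy]
    have h2 : (-(c y true * c z false)) w = -(c y true (c z false w)) := rfl
    rw [h2, hw z hz, map_zero, neg_zero]
  have pd_d : ∀ (w : 𝓥), (∀ z ∈ Finset.Icc 1 L, c z false w = 0) →
      ∀ y ∈ Finset.Icc 1 L, ∀ z ∈ Finset.Icc 1 L, c z false (cdag y true w) = 0 := by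
    intro w hw y hy z hz
    have h : c z false (cdag y true w) = (c z false * cdag y true) w := rfl
    rw [h, hfd z hz y hy]
    have h2 : (-(cdag y true * c z false)) w = -(cdag y true (c z false w)) := rfl
    rw [h2, hw z hz, map_zero, neg_zero]
  -- the state is annihilated by all down annihilators
  have hfT : ∀ z ∈ Finset.Icc 1 L, ∀ y ∈ Finset.Icc 1 L,
      c z false * taOp L δ (fun y => cdag y true) y
        = -(taOp L δ (fun y => cdag y true) y * c z false) := by
    intro z hz y hy
    have hy' := Finset.mem_Icc.mp hy
    have hq : ∀ w ∈ Finset.Icc 1 L, c z false * (fun y => cdag y true) w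
        = (0:ℂ) • 1 - (fun y => cdag y true) w * c z false := by
      intro w hw
      rw [zero_smul, zero_sub]
      exact hfd z hz w hw
    rw [S8aux.taOp_eq _ hy'.1 hy'.2, S8aux.q_mul_Ee _ (c z false) (fun _ => (0:ℂ)) hq]
    simp
  have hfζ : ∀ z ∈ Finset.Icc 1 L, c z false * (zetaDag L δ (fun y => cdag y true)) = (zetaDag L δ (fun y => cdag y true)) * c z false := by
    intro z hz
    exact S8aux.q_comm_zeta _ (c z false) (fun y hy => hfT z hz y hy)
  have hpdΨ : ∀ z ∈ Finset.Icc 1 L, c z false (taOp L δ (fun y => cdag y true) L (((zetaDag L δ (fun y => cdag y true))^Np) Φ0)) = 0 := by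
    intro z hz
    have h1 : c z false (taOp L δ (fun y => cdag y true) L (((zetaDag L δ (fun y => cdag y true))^Np) Φ0)) = (c z false * (taOp L δ (fun y => cdag y true) L)) (((zetaDag L δ (fun y => cdag y true))^Np) Φ0) := rfl
    rw [h1, hfT z hz L hLI]
    have h2 : (-((taOp L δ (fun y => cdag y true) L) * c z false)) (((zetaDag L δ (fun y => cdag y true))^Np) Φ0)
        = -((taOp L δ (fun y => cdag y true) L) ((c z false * (zetaDag L δ (fun y => cdag y true))^Np) Φ0)) := rfl
    rw [h2, ((show Commute (c z false) (zetaDag L δ (fun y => cdag y true)) from hfζ z hz).pow_right Np).eq]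
    have h3 : (((zetaDag L δ (fun y => cdag y true))^Np * c z false)) Φ0 = ((zetaDag L δ (fun y => cdag y true))^Np) (c z false Φ0) := rfl
    rw [h3, hΦ0 z hz false, map_zero, map_zero, neg_zero]
  have hnf : ∀ y ∈ Finset.Icc 1 L, ∀ w : 𝓥, c y false w = 0 → nOp c cdag y false w = 0 := by
    intro y hy w hw
    have h : nOp c cdag y false w = cdag y false (c y false w) := rfl
    rw [h, hw, map_zero]
  -- expansion of a spin operator on a down-annihilated vector
  have hspin : ∀ (l : Fin 3) (y : ℕ), y ∈ Finset.Icc 1 L → ∀ w : 𝓥, c y false w = 0 →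
      spinOp c cdag y l w = (1/2:ℂ) • (pauli l true true • (cdag y true (c y true w))
        + pauli l false true • (cdag y false (c y true w))) := by
    intro l y hy w hw
    have hexp : (∑ σ : Bool, ∑ τ : Bool, pauli l σ τ • (cdag y σ * c y τ))
        = (pauli l true true • (cdag y true * c y true)
            + pauli l true false • (cdag y true * c y false))
          + (pauli l false true • (cdag y false * c y true)
            + pauli l false false • (cdag y false * c y false)) := by
      rw [Fintype.sum_bool, Fintype.sum_bool, Fintype.sum_bool]
    have h : spinOp c cdag y l w
        = (1/2:ℂ) • ((∑ σ : Bool, ∑ τ : Bool, pauli l σ τ • (cdag y σ * c y τ)) w) := rfl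
    rw [h, hexp]
    have h3 : ((pauli l true true • (cdag y true * c y true)
            + pauli l true false • (cdag y true * c y false))
          + (pauli l false true • (cdag y false * c y true)
            + pauli l false false • (cdag y false * c y false))) w
        = (pauli l true true • (cdag y true (c y true w))
            + pauli l true false • (cdag y true (c y false w)))
          + (pauli l false true • (cdag y false (c y true w))
            + pauli l false false • (cdag y false (c y false w))) := rfl
    rw [h3, hw, map_zero, map_zero, smul_zero, smul_zero, add_zero, add_zero]
  -- main statement for each bond
  have main : ∀ x ∈ Finset.Icc 1 (L-1), Hloc t Vv δ U J c cdag x (taOp L δ (fun y => cdag y true) L (((zetaDag L δ (fun y => cdag y true))^Np) Φ0)) = 0 := by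
    intro x hx
    obtain ⟨hx1, hxL⟩ := Finset.mem_Icc.mp hx
    have hxI : x ∈ Finset.Icc 1 L := Finset.mem_Icc.mpr ⟨hx1, by omega⟩
    have hx1I : x + 1 ∈ Finset.Icc 1 L := Finset.mem_Icc.mpr ⟨by omega, by omega⟩
    -- scalar fact
    have httR : t = Vv * (wR δ x * wR δ (x+1)) := by
      rw [S8aux.wprod δ x, hδ]
      field_simp
    have htt : (t : ℂ) = (Vv : ℂ) * (((wR δ x : ℝ) : ℂ) * ((wR δ (x+1) : ℝ) : ℂ)) := by
      exact_mod_cast congrArg Complex.ofReal httR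
    -- pd facts for derived vectors
    have hvA : c x false (cdag (x+1) true (c (x+1) true (taOp L δ (fun y => cdag y true) L (((zetaDag L δ (fun y => cdag y true))^Np) Φ0)))) = 0 :=
      pd_d (c (x+1) true (taOp L δ (fun y => cdag y true) L (((zetaDag L δ (fun y => cdag y true))^Np) Φ0))) (pd_c (taOp L δ (fun y => cdag y true) L (((zetaDag L δ (fun y => cdag y true))^Np) Φ0)) hpdΨ (x+1) hx1I) (x+1) hx1I x hxI
    have hvB : c x false (cdag (x+1) false (c (x+1) true (taOp L δ (fun y => cdag y true) L (((zetaDag L δ (fun y => cdag y true))^Np) Φ0)))) = 0 := by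
      have hanti : c x false * cdag (x+1) false = -(cdag (x+1) false * c x false) := by
        have hh := car_dc (x+1) hx1I x hxI false false
        rw [if_neg (by intro hco; exact absurd hco.1 (by omega))] at hh
        rw [add_comm] at hh
        exact eq_neg_of_add_eq_zero_left hh
      have h : c x false (cdag (x+1) false (c (x+1) true (taOp L δ (fun y => cdag y true) L (((zetaDag L δ (fun y => cdag y true))^Np) Φ0)))) = (c x false * cdag (x+1) false) (c (x+1) true (taOp L δ (fun y => cdag y true) L (((zetaDag L δ (fun y => cdag y true))^Np) Φ0))) := rfl
      rw [h, hanti]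
      have h2 : (-(cdag (x+1) false * c x false)) (c (x+1) true (taOp L δ (fun y => cdag y true) L (((zetaDag L δ (fun y => cdag y true))^Np) Φ0)))
          = -(cdag (x+1) false (c x false (c (x+1) true (taOp L δ (fun y => cdag y true) L (((zetaDag L δ (fun y => cdag y true))^Np) Φ0))))) := rfl
      rw [h2, pd_c (taOp L δ (fun y => cdag y true) L (((zetaDag L δ (fun y => cdag y true))^Np) Φ0)) hpdΨ (x+1) hx1I x hxI, map_zero, neg_zero]
    have hvApd : ∀ z ∈ Finset.Icc 1 L, c z false (cdag (x+1) true (c (x+1) true (taOp L δ (fun y => cdag y true) L (((zetaDag L δ (fun y => cdag y true))^Np) Φ0)))) = 0 :=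
      fun z hz => pd_d (c (x+1) true (taOp L δ (fun y => cdag y true) L (((zetaDag L δ (fun y => cdag y true))^Np) Φ0))) (pd_c (taOp L δ (fun y => cdag y true) L (((zetaDag L δ (fun y => cdag y true))^Np) Φ0)) hpdΨ (x+1) hx1I) (x+1) hx1I z hz
    -- n_x n_(x+1) on Ψ
    have hnt : (ntot c cdag x * ntot c cdag (x+1)) (taOp L δ (fun y => cdag y true) L (((zetaDag L δ (fun y => cdag y true))^Np) Φ0))
        = cdag x true (c x true (cdag (x+1) true (c (x+1) true (taOp L δ (fun y => cdag y true) L (((zetaDag L δ (fun y => cdag y true))^Np) Φ0))))) := by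
      have h1 : (ntot c cdag x * ntot c cdag (x+1)) (taOp L δ (fun y => cdag y true) L (((zetaDag L δ (fun y => cdag y true))^Np) Φ0))
          = ntot c cdag x (ntot c cdag (x+1) (taOp L δ (fun y => cdag y true) L (((zetaDag L δ (fun y => cdag y true))^Np) Φ0))) := rfl
      have h2 : ntot c cdag (x+1) (taOp L δ (fun y => cdag y true) L (((zetaDag L δ (fun y => cdag y true))^Np) Φ0)) = (cdag (x+1) true (c (x+1) true (taOp L δ (fun y => cdag y true) L (((zetaDag L δ (fun y => cdag y true))^Np) Φ0)))) + cdag (x+1) false (c (x+1) false (taOp L δ (fun y => cdag y true) L (((zetaDag L δ (fun y => cdag y true))^Np) Φ0))) := rfl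
      rw [h1, h2, hpdΨ (x+1) hx1I, map_zero, add_zero]
      have h3 : ntot c cdag x (cdag (x+1) true (c (x+1) true (taOp L δ (fun y => cdag y true) L (((zetaDag L δ (fun y => cdag y true))^Np) Φ0)))) = cdag x true (c x true (cdag (x+1) true (c (x+1) true (taOp L δ (fun y => cdag y true) L (((zetaDag L δ (fun y => cdag y true))^Np) Φ0))))) + cdag x false (c x false (cdag (x+1) true (c (x+1) true (taOp L δ (fun y => cdag y true) L (((zetaDag L δ (fun y => cdag y true))^Np) Φ0))))) := rfl
      rw [h3, hvApd x hxI, map_zero, add_zero]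
    -- HU
    have hHU : HU U c cdag x (taOp L δ (fun y => cdag y true) L (((zetaDag L δ (fun y => cdag y true))^Np) Φ0)) = 0 := by
      have h : HU U c cdag x (taOp L δ (fun y => cdag y true) L (((zetaDag L δ (fun y => cdag y true))^Np) Φ0))
          = (U:ℂ) • (nOp c cdag x true (nOp c cdag x false (taOp L δ (fun y => cdag y true) L (((zetaDag L δ (fun y => cdag y true))^Np) Φ0)))
            + nOp c cdag (x+1) true (nOp c cdag (x+1) false (taOp L δ (fun y => cdag y true) L (((zetaDag L δ (fun y => cdag y true))^Np) Φ0)))) := rfl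
      rw [h, hnf x hxI _ (hpdΨ x hxI), hnf (x+1) hx1I _ (hpdΨ (x+1) hx1I), map_zero, map_zero,
        add_zero, smul_zero]
    -- HJ
    have hSS : (∑ l : Fin 3, spinOp c cdag x l * spinOp c cdag (x+1) l) (taOp L δ (fun y => cdag y true) L (((zetaDag L δ (fun y => cdag y true))^Np) Φ0))
        = (1/4 : ℂ) • (cdag x true (c x true (cdag (x+1) true (c (x+1) true (taOp L δ (fun y => cdag y true) L (((zetaDag L δ (fun y => cdag y true))^Np) Φ0)))))) := by
      rw [LinearMap.sum_apply, Fin.sum_univ_three]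
      have e : ∀ l : Fin 3, (spinOp c cdag x l * spinOp c cdag (x+1) l) (taOp L δ (fun y => cdag y true) L (((zetaDag L δ (fun y => cdag y true))^Np) Φ0))
          = (1/2:ℂ) • (pauli l true true • ((1/2:ℂ) •
                (pauli l true true • (cdag x true (c x true (cdag (x+1) true (c (x+1) true (taOp L δ (fun y => cdag y true) L (((zetaDag L δ (fun y => cdag y true))^Np) Φ0))))))
                  + pauli l false true • (cdag x false (c x true (cdag (x+1) true (c (x+1) true (taOp L δ (fun y => cdag y true) L (((zetaDag L δ (fun y => cdag y true))^Np) Φ0))))))))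
            + pauli l false true • ((1/2:ℂ) •
                (pauli l true true • (cdag x true (c x true (cdag (x+1) false (c (x+1) true (taOp L δ (fun y => cdag y true) L (((zetaDag L δ (fun y => cdag y true))^Np) Φ0))))))
                  + pauli l false true • (cdag x false (c x true (cdag (x+1) false (c (x+1) true (taOp L δ (fun y => cdag y true) L (((zetaDag L δ (fun y => cdag y true))^Np) Φ0))))))))) := by
        intro l
        have h1 : (spinOp c cdag x l * spinOp c cdag (x+1) l) (taOp L δ (fun y => cdag y true) L (((zetaDag L δ (fun y => cdag y true))^Np) Φ0))
            = spinOp c cdag x l (spinOp c cdag (x+1) l (taOp L δ (fun y => cdag y true) L (((zetaDag L δ (fun y => cdag y true))^Np) Φ0))) := rfl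
        rw [h1, hspin l (x+1) hx1I (taOp L δ (fun y => cdag y true) L (((zetaDag L δ (fun y => cdag y true))^Np) Φ0)) (hpdΨ (x+1) hx1I), map_smul, map_add, map_smul,
          map_smul, hspin l x hxI (cdag (x+1) true (c (x+1) true (taOp L δ (fun y => cdag y true) L (((zetaDag L δ (fun y => cdag y true))^Np) Φ0)))) hvA, hspin l x hxI (cdag (x+1) false (c (x+1) true (taOp L δ (fun y => cdag y true) L (((zetaDag L δ (fun y => cdag y true))^Np) Φ0)))) hvB]
      rw [e 0, e 1, e 2]
      simp only [pauli]
      norm_num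
      match_scalars <;> (first | ring1 | linear_combination Complex.I_sq / 4 | linear_combination -Complex.I_sq / 4)
    have hHJ : HJ J c cdag x (taOp L δ (fun y => cdag y true) L (((zetaDag L δ (fun y => cdag y true))^Np) Φ0)) = 0 := by
      have h : HJ J c cdag x (taOp L δ (fun y => cdag y true) L (((zetaDag L δ (fun y => cdag y true))^Np) Φ0))
          = (J:ℂ) • ((1/4:ℂ) • ((ntot c cdag x * ntot c cdag (x+1)) (taOp L δ (fun y => cdag y true) L (((zetaDag L δ (fun y => cdag y true))^Np) Φ0)))
            - (∑ l : Fin 3, spinOp c cdag x l * spinOp c cdag (x+1) l) (taOp L δ (fun y => cdag y true) L (((zetaDag L δ (fun y => cdag y true))^Np) Φ0))) := rfl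
      rw [h, hnt, hSS, sub_self, smul_zero]
    -- HX
    have hw : ∀ z ∈ Finset.Icc 1 L,
        c z false (cdag x true (c (x+1) true (taOp L δ (fun y => cdag y true) L (((zetaDag L δ (fun y => cdag y true))^Np) Φ0))) + cdag (x+1) true (c x true (taOp L δ (fun y => cdag y true) L (((zetaDag L δ (fun y => cdag y true))^Np) Φ0)))) = 0 := by
      intro z hz
      rw [map_add, pd_d (c (x+1) true (taOp L δ (fun y => cdag y true) L (((zetaDag L δ (fun y => cdag y true))^Np) Φ0))) (pd_c (taOp L δ (fun y => cdag y true) L (((zetaDag L δ (fun y => cdag y true))^Np) Φ0)) hpdΨ (x+1) hx1I) x hxI z hz,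
        pd_d (c x true (taOp L δ (fun y => cdag y true) L (((zetaDag L δ (fun y => cdag y true))^Np) Φ0))) (pd_c (taOp L δ (fun y => cdag y true) L (((zetaDag L δ (fun y => cdag y true))^Np) Φ0)) hpdΨ x hxI) (x+1) hx1I z hz, add_zero]
    have hHX : HX Vv δ c cdag x (taOp L δ (fun y => cdag y true) L (((zetaDag L δ (fun y => cdag y true))^Np) Φ0)) = 0 := by
      have hsum : (∑ σ : Bool, ((Xpar Vv δ x : ℂ) • nOp c cdag x (!σ)
            + (Xpar Vv δ (x+1) : ℂ) • nOp c cdag (x+1) (!σ))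
            * (cdag x σ * c (x+1) σ + cdag (x+1) σ * c x σ))
          = ((Xpar Vv δ x : ℂ) • nOp c cdag x false
              + (Xpar Vv δ (x+1) : ℂ) • nOp c cdag (x+1) false)
              * (cdag x true * c (x+1) true + cdag (x+1) true * c x true)
            + ((Xpar Vv δ x : ℂ) • nOp c cdag x true
              + (Xpar Vv δ (x+1) : ℂ) • nOp c cdag (x+1) true)
              * (cdag x false * c (x+1) false + cdag (x+1) false * c x false) := by
        rw [Fintype.sum_bool]
        simp only [Bool.not_true, Bool.not_false]
      have h1 : HX Vv δ c cdag x (taOp L δ (fun y => cdag y true) L (((zetaDag L δ (fun y => cdag y true))^Np) Φ0))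
          = ((((Xpar Vv δ x : ℂ) • nOp c cdag x false
              + (Xpar Vv δ (x+1) : ℂ) • nOp c cdag (x+1) false)
              * (cdag x true * c (x+1) true + cdag (x+1) true * c x true))
            + (((Xpar Vv δ x : ℂ) • nOp c cdag x true
              + (Xpar Vv δ (x+1) : ℂ) • nOp c cdag (x+1) true)
              * (cdag x false * c (x+1) false + cdag (x+1) false * c x false))) (taOp L δ (fun y => cdag y true) L (((zetaDag L δ (fun y => cdag y true))^Np) Φ0)) := by
        rw [HX, hsum]
      have hG1 : ((((Xpar Vv δ x : ℂ) • nOp c cdag x false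
              + (Xpar Vv δ (x+1) : ℂ) • nOp c cdag (x+1) false)
              * (cdag x true * c (x+1) true + cdag (x+1) true * c x true))) (taOp L δ (fun y => cdag y true) L (((zetaDag L δ (fun y => cdag y true))^Np) Φ0)) = 0 := by
        have h : ((((Xpar Vv δ x : ℂ) • nOp c cdag x false
              + (Xpar Vv δ (x+1) : ℂ) • nOp c cdag (x+1) false)
              * (cdag x true * c (x+1) true + cdag (x+1) true * c x true))) (taOp L δ (fun y => cdag y true) L (((zetaDag L δ (fun y => cdag y true))^Np) Φ0))
            = (Xpar Vv δ x : ℂ) • (nOp c cdag x false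
                (cdag x true (c (x+1) true (taOp L δ (fun y => cdag y true) L (((zetaDag L δ (fun y => cdag y true))^Np) Φ0))) + cdag (x+1) true (c x true (taOp L δ (fun y => cdag y true) L (((zetaDag L δ (fun y => cdag y true))^Np) Φ0)))))
              + (Xpar Vv δ (x+1) : ℂ) • (nOp c cdag (x+1) false
                (cdag x true (c (x+1) true (taOp L δ (fun y => cdag y true) L (((zetaDag L δ (fun y => cdag y true))^Np) Φ0))) + cdag (x+1) true (c x true (taOp L δ (fun y => cdag y true) L (((zetaDag L δ (fun y => cdag y true))^Np) Φ0))))) := rfl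
        rw [h, hnf x hxI _ (hw x hxI), hnf (x+1) hx1I _ (hw (x+1) hx1I), smul_zero, smul_zero,
          add_zero]
      have hG2 : ((((Xpar Vv δ x : ℂ) • nOp c cdag x true
              + (Xpar Vv δ (x+1) : ℂ) • nOp c cdag (x+1) true)
              * (cdag x false * c (x+1) false + cdag (x+1) false * c x false))) (taOp L δ (fun y => cdag y true) L (((zetaDag L δ (fun y => cdag y true))^Np) Φ0)) = 0 := by
        have h : ((((Xpar Vv δ x : ℂ) • nOp c cdag x true
              + (Xpar Vv δ (x+1) : ℂ) • nOp c cdag (x+1) true)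
              * (cdag x false * c (x+1) false + cdag (x+1) false * c x false))) (taOp L δ (fun y => cdag y true) L (((zetaDag L δ (fun y => cdag y true))^Np) Φ0))
            = ((Xpar Vv δ x : ℂ) • nOp c cdag x true
              + (Xpar Vv δ (x+1) : ℂ) • nOp c cdag (x+1) true)
                (cdag x false (c (x+1) false (taOp L δ (fun y => cdag y true) L (((zetaDag L δ (fun y => cdag y true))^Np) Φ0))) + cdag (x+1) false (c x false (taOp L δ (fun y => cdag y true) L (((zetaDag L δ (fun y => cdag y true))^Np) Φ0)))) := rfl
        rw [h, hpdΨ (x+1) hx1I, hpdΨ x hxI, map_zero, map_zero, add_zero, map_zero]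
      have h2 : ((((Xpar Vv δ x : ℂ) • nOp c cdag x false
              + (Xpar Vv δ (x+1) : ℂ) • nOp c cdag (x+1) false)
              * (cdag x true * c (x+1) true + cdag (x+1) true * c x true))
            + (((Xpar Vv δ x : ℂ) • nOp c cdag x true
              + (Xpar Vv δ (x+1) : ℂ) • nOp c cdag (x+1) true)
              * (cdag x false * c (x+1) false + cdag (x+1) false * c x false))) (taOp L δ (fun y => cdag y true) L (((zetaDag L δ (fun y => cdag y true))^Np) Φ0))
          = ((((Xpar Vv δ x : ℂ) • nOp c cdag x false
              + (Xpar Vv δ (x+1) : ℂ) • nOp c cdag (x+1) false)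
              * (cdag x true * c (x+1) true + cdag (x+1) true * c x true))) (taOp L δ (fun y => cdag y true) L (((zetaDag L δ (fun y => cdag y true))^Np) Φ0))
            + ((((Xpar Vv δ x : ℂ) • nOp c cdag x true
              + (Xpar Vv δ (x+1) : ℂ) • nOp c cdag (x+1) true)
              * (cdag x false * c (x+1) false + cdag (x+1) false * c x false))) (taOp L δ (fun y => cdag y true) L (((zetaDag L δ (fun y => cdag y true))^Np) Φ0)) := rfl
      rw [h1, h2, hG1, hG2, add_zero]
    -- Ht + HV via the up-spin lemma
    have key := S8aux.upspin hL3 δ t Vv hs (fun y => cdag y true) (fun y => c y true)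
      hdd haa had Φ0 hΦ0up x hx1 hxL Np htt
    have key' : (-(t:ℂ)) • (cdag x true (c (x+1) true (taOp L δ (fun y => cdag y true) L (((zetaDag L δ (fun y => cdag y true))^Np) Φ0))) + cdag (x+1) true (c x true (taOp L δ (fun y => cdag y true) L (((zetaDag L δ (fun y => cdag y true))^Np) Φ0))))
        - ((muPot Vv δ x : ℝ) : ℂ) • (cdag x true (c x true (taOp L δ (fun y => cdag y true) L (((zetaDag L δ (fun y => cdag y true))^Np) Φ0))))
        - ((muPot Vv δ (x+1) : ℝ) : ℂ) • (cdag (x+1) true (c (x+1) true (taOp L δ (fun y => cdag y true) L (((zetaDag L δ (fun y => cdag y true))^Np) Φ0))))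
        - ((Vv : ℝ) : ℂ) • (cdag x true (c x true (cdag (x+1) true (c (x+1) true (taOp L δ (fun y => cdag y true) L (((zetaDag L δ (fun y => cdag y true))^Np) Φ0)))))) = 0 := key
    have hhop : (∑ σ : Bool, (cdag x σ * c (x+1) σ + cdag (x+1) σ * c x σ))
        = (cdag x true * c (x+1) true + cdag (x+1) true * c x true)
          + (cdag x false * c (x+1) false + cdag (x+1) false * c x false) :=
      Fintype.sum_bool _
    have hHt : Ht t Vv δ c cdag x (taOp L δ (fun y => cdag y true) L (((zetaDag L δ (fun y => cdag y true))^Np) Φ0))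
        = (-(t:ℂ)) • (cdag x true (c (x+1) true (taOp L δ (fun y => cdag y true) L (((zetaDag L δ (fun y => cdag y true))^Np) Φ0))) + cdag (x+1) true (c x true (taOp L δ (fun y => cdag y true) L (((zetaDag L δ (fun y => cdag y true))^Np) Φ0))))
          - ((muPot Vv δ x : ℝ) : ℂ) • (cdag x true (c x true (taOp L δ (fun y => cdag y true) L (((zetaDag L δ (fun y => cdag y true))^Np) Φ0))))
          - ((muPot Vv δ (x+1) : ℝ) : ℂ) • (cdag (x+1) true (c (x+1) true (taOp L δ (fun y => cdag y true) L (((zetaDag L δ (fun y => cdag y true))^Np) Φ0)))) := by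
      rw [Ht, hhop]
      have hA : (((-t:ℂ)) • ((cdag x true * c (x+1) true + cdag (x+1) true * c x true)
            + (cdag x false * c (x+1) false + cdag (x+1) false * c x false))
          - (muPot Vv δ x : ℂ) • ntot c cdag x
          - (muPot Vv δ (x+1) : ℂ) • ntot c cdag (x+1)) (taOp L δ (fun y => cdag y true) L (((zetaDag L δ (fun y => cdag y true))^Np) Φ0))
          = (-(t:ℂ)) • ((cdag x true (c (x+1) true (taOp L δ (fun y => cdag y true) L (((zetaDag L δ (fun y => cdag y true))^Np) Φ0))) + cdag (x+1) true (c x true (taOp L δ (fun y => cdag y true) L (((zetaDag L δ (fun y => cdag y true))^Np) Φ0))))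
              + (cdag x false (c (x+1) false (taOp L δ (fun y => cdag y true) L (((zetaDag L δ (fun y => cdag y true))^Np) Φ0))) + cdag (x+1) false (c x false (taOp L δ (fun y => cdag y true) L (((zetaDag L δ (fun y => cdag y true))^Np) Φ0)))))
            - (muPot Vv δ x : ℂ) • (cdag x true (c x true (taOp L δ (fun y => cdag y true) L (((zetaDag L δ (fun y => cdag y true))^Np) Φ0)))
                + cdag x false (c x false (taOp L δ (fun y => cdag y true) L (((zetaDag L δ (fun y => cdag y true))^Np) Φ0))))
            - (muPot Vv δ (x+1) : ℂ) • (cdag (x+1) true (c (x+1) true (taOp L δ (fun y => cdag y true) L (((zetaDag L δ (fun y => cdag y true))^Np) Φ0)))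
                + cdag (x+1) false (c (x+1) false (taOp L δ (fun y => cdag y true) L (((zetaDag L δ (fun y => cdag y true))^Np) Φ0)))) := rfl
      rw [hA, hpdΨ x hxI, hpdΨ (x+1) hx1I]
      simp only [map_zero, add_zero]
    have hHV : HV Vv c cdag x (taOp L δ (fun y => cdag y true) L (((zetaDag L δ (fun y => cdag y true))^Np) Φ0)) = (-(Vv:ℂ)) • (cdag x true (c x true (cdag (x+1) true (c (x+1) true (taOp L δ (fun y => cdag y true) L (((zetaDag L δ (fun y => cdag y true))^Np) Φ0)))))) := by
      have h : HV Vv c cdag x (taOp L δ (fun y => cdag y true) L (((zetaDag L δ (fun y => cdag y true))^Np) Φ0)) = (-Vv:ℂ) • ((ntot c cdag x * ntot c cdag (x+1)) (taOp L δ (fun y => cdag y true) L (((zetaDag L δ (fun y => cdag y true))^Np) Φ0))) := rfl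
      rw [h, hnt]
    have hHtV : Ht t Vv δ c cdag x (taOp L δ (fun y => cdag y true) L (((zetaDag L δ (fun y => cdag y true))^Np) Φ0)) + HV Vv c cdag x (taOp L δ (fun y => cdag y true) L (((zetaDag L δ (fun y => cdag y true))^Np) Φ0)) = 0 := by
      rw [hHt, hHV]
      have hre : (-(t:ℂ)) • (cdag x true (c (x+1) true (taOp L δ (fun y => cdag y true) L (((zetaDag L δ (fun y => cdag y true))^Np) Φ0))) + cdag (x+1) true (c x true (taOp L δ (fun y => cdag y true) L (((zetaDag L δ (fun y => cdag y true))^Np) Φ0))))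
          - ((muPot Vv δ x : ℝ) : ℂ) • (cdag x true (c x true (taOp L δ (fun y => cdag y true) L (((zetaDag L δ (fun y => cdag y true))^Np) Φ0))))
          - ((muPot Vv δ (x+1) : ℝ) : ℂ) • (cdag (x+1) true (c (x+1) true (taOp L δ (fun y => cdag y true) L (((zetaDag L δ (fun y => cdag y true))^Np) Φ0))))
          + (-(Vv:ℂ)) • (cdag x true (c x true (cdag (x+1) true (c (x+1) true (taOp L δ (fun y => cdag y true) L (((zetaDag L δ (fun y => cdag y true))^Np) Φ0))))))
          = (-(t:ℂ)) • (cdag x true (c (x+1) true (taOp L δ (fun y => cdag y true) L (((zetaDag L δ (fun y => cdag y true))^Np) Φ0))) + cdag (x+1) true (c x true (taOp L δ (fun y => cdag y true) L (((zetaDag L δ (fun y => cdag y true))^Np) Φ0))))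
            - ((muPot Vv δ x : ℝ) : ℂ) • (cdag x true (c x true (taOp L δ (fun y => cdag y true) L (((zetaDag L δ (fun y => cdag y true))^Np) Φ0))))
            - ((muPot Vv δ (x+1) : ℝ) : ℂ) • (cdag (x+1) true (c (x+1) true (taOp L δ (fun y => cdag y true) L (((zetaDag L δ (fun y => cdag y true))^Np) Φ0))))
            - ((Vv : ℝ) : ℂ) • (cdag x true (c x true (cdag (x+1) true (c (x+1) true (taOp L δ (fun y => cdag y true) L (((zetaDag L δ (fun y => cdag y true))^Np) Φ0)))))) := by
        module
      rw [hre, key']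
    -- assemble
    have hfin : Hloc t Vv δ U J c cdag x (taOp L δ (fun y => cdag y true) L (((zetaDag L δ (fun y => cdag y true))^Np) Φ0))
        = Ht t Vv δ c cdag x (taOp L δ (fun y => cdag y true) L (((zetaDag L δ (fun y => cdag y true))^Np) Φ0)) + HU U c cdag x (taOp L δ (fun y => cdag y true) L (((zetaDag L δ (fun y => cdag y true))^Np) Φ0)) + HV Vv c cdag x (taOp L δ (fun y => cdag y true) L (((zetaDag L δ (fun y => cdag y true))^Np) Φ0))
          + HJ J c cdag x (taOp L δ (fun y => cdag y true) L (((zetaDag L δ (fun y => cdag y true))^Np) Φ0)) + HX Vv δ c cdag x (taOp L δ (fun y => cdag y true) L (((zetaDag L δ (fun y => cdag y true))^Np) Φ0)) := rfl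
    rw [hfin, hHU, hHJ, hHX]
    simp only [add_zero]
    exact hHtV
  exact ⟨main, by rw [LinearMap.sum_apply]; exact Finset.sum_eq_zero main⟩

end
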